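/- arXiv:2009.12014 — 6 statements merged into one kernel-verified Lean document; each statement's English description precedes it below -/
import Mathlib

section
/- Let f be a nondegenerate form of degree d in n variables over k. Then the center Z(f) is closed under matrix multiplication and is commutative: for all X, Y ∈ Z(f), the product X·Y lies in Z(f) and X·Y = Y·X. In particular Z(f) is a commutative unital k-subalgebra of the n×n matrix algebra over k. -/
open MvPolynomial Matrix

/-- The Hessian matrix of a multivariate polynomial. -/
noncomputable def hessian {k : Type*} [Field k] {σ : Type*} (f : MvPolynomial σ k) :
    Matrix σ σ (MvPolynomial σ k) :=
  Matrix.of fun i j => pderiv i (pderiv j f)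

/-- The center of a form `f`: scalar matrices `X` such that `H · X` is symmetric,
where `H` is the Hessian matrix of `f`. -/
def center {k : Type*} [Field k] {σ : Type*} [Fintype σ] (f : MvPolynomial σ k) :
    Set (Matrix σ σ k) :=
  {X | (hessian f * X.map (C : k → MvPolynomial σ k))ᵀ
        = hessian f * X.map (C : k → MvPolynomial σ k)}

/-!
Since `H` is symmetric, `X ∈ Z(f)` means `Xᵀ H = H X`, and then for `X, Y ∈ Z(f)` one gets
`(H X Y)ᵀ = H Y X`. Hence `A = H (XY - YX)` is antisymmetric. Its entries are
`A i l = ∂ᵢ hₗ` with `hₗ = ∑ⱼ (XY - YX)ⱼₗ ∂ⱼ f`, so the third derivatives `∂ₐ ∂ᵢ hₗ` are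
symmetric in `(a, i)` and antisymmetric in `(i, l)`, which forces them to vanish.
By Euler's identity a form of degree `m` with `m ≠ 0` in `k` and vanishing gradient is zero;
applied in degrees `d - 2` and `d - 1`, this gives `hₗ = 0`, and nondegeneracy of `f` gives
`XY = YX`. Then `H X Y` is symmetric, i.e. `XY ∈ Z(f)`.
-/

theorem eq_zero_of_symm_of_antisymm {A ι : Type*} [Ring A] [NoZeroDivisors A] (h2 : (2 : A) ≠ 0)
    {T : ι → ι → ι → A} (hsymm : ∀ a i l, T a i l = T i a l)
    (hanti : ∀ a i l, T a i l = -T a l i) (a i l : ι) : T a i l = 0 := by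
  have hneg : T a i l = -T a i l :=
    calc T a i l = T i a l := hsymm a i l
      _ = -T i l a := hanti i a l
      _ = -T l i a := by rw [hsymm i l a]
      _ = T l a i := by rw [hanti l i a, neg_neg]
      _ = T a l i := hsymm l a i
      _ = -T a i l := hanti a l i
  have htwice : (2 : A) * T a i l = 0 := by
    rw [two_mul, ← eq_neg_iff_add_eq_zero]
    exact hneg
  exact (mul_eq_zero.mp htwice).resolve_left h2

theorem natCast_ne_zero_of_ringChar {R : Type*} [NonAssocSemiring R] {d m : ℕ}
    (hchar : ringChar R = 0 ∨ d < ringChar R) (hm : 0 < m) (hmd : m ≤ d) : (m : R) ≠ 0 := by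
  rw [Ne, ringChar.spec]
  rcases hchar with h | h
  · rw [h, zero_dvd_iff]
    omega
  · exact fun hdvd => absurd (Nat.le_of_dvd hm hdvd) (by omega)

namespace MvPolynomial

variable {R σ : Type*}

theorem pderiv_pderiv_comm [CommSemiring R] (i j : σ) (p : MvPolynomial σ R) :
    pderiv i (pderiv j p) = pderiv j (pderiv i p) := by
  classical
  induction p using MvPolynomial.induction_on with
  | C a => simp
  | add p q hp hq => simp [hp, hq]
  | mul_X p m hp =>
      simp only [pderiv_mul, map_add, hp, pderiv_X, Pi.single_apply, apply_ite,
        pderiv_one, map_zero]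
      split_ifs <;> ring_nf

theorem IsHomogeneous.eq_zero_of_forall_pderiv_eq_zero [CommSemiring R] [NoZeroDivisors R]
    [Fintype σ] {φ : MvPolynomial σ R} {n : ℕ} (hφ : φ.IsHomogeneous n) (hn : (n : R) ≠ 0)
    (h : ∀ i, pderiv i φ = 0) : φ = 0 := by
  have hEuler := hφ.sum_X_mul_pderiv
  simp only [h, mul_zero, Finset.sum_const_zero, nsmul_eq_mul] at hEuler
  refine (mul_eq_zero.mp hEuler.symm).resolve_left ?_
  rw [← map_natCast C]
  exact C_ne_zero.mpr hn

theorem eq_zero_of_pderiv_antisymm [CommRing R] [NoZeroDivisors R] [Fintype σ]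
    {h : σ → MvPolynomial σ R} {m : ℕ} (hh : ∀ l, (h l).IsHomogeneous m)
    (hanti : ∀ i l, pderiv i (h l) = -pderiv l (h i)) (h2 : (2 : R) ≠ 0) (hm : (m : R) ≠ 0)
    (hm1 : ((m - 1 : ℕ) : R) ≠ 0) (l : σ) : h l = 0 := by
  have third : ∀ a i l, pderiv a (pderiv i (h l)) = 0 :=
    eq_zero_of_symm_of_antisymm (by rwa [← map_ofNat C, Ne, C_eq_zero])
      (fun a i l => pderiv_pderiv_comm a i (h l)) (fun a i l => by rw [hanti i l, map_neg])
  have second : ∀ i l, pderiv i (h l) = 0 := fun i l =>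
    (hh l).pderiv.eq_zero_of_forall_pderiv_eq_zero hm1 fun a => third a i l
  exact (hh l).eq_zero_of_forall_pderiv_eq_zero hm fun i => second i l

end MvPolynomial

section Center

variable {k σ : Type*} [Field k]

theorem hessian_transpose (f : MvPolynomial σ k) : (hessian f)ᵀ = hessian f :=
  Matrix.ext fun i j => pderiv_pderiv_comm j i f

variable [Fintype σ] {f : MvPolynomial σ k} {X Y : Matrix σ σ k}

theorem mem_center_iff : X ∈ center f ↔ (X.map C)ᵀ * hessian f = hessian f * X.map C := by
  rw [center, Set.mem_ofPred_eq, transpose_mul, hessian_transpose]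

theorem one_mem_center [DecidableEq σ] (f : MvPolynomial σ k) : 1 ∈ center f := by
  rw [mem_center_iff, Matrix.map_one _ (map_zero C) (map_one C), transpose_one, one_mul, mul_one]

theorem transpose_hessian_mul_map_mul (hX : X ∈ center f) (hY : Y ∈ center f) :
    (hessian f * (X * Y).map C)ᵀ = hessian f * (Y * X).map C := by
  rw [mem_center_iff] at hX hY
  rw [Matrix.map_mul, Matrix.map_mul, transpose_mul, hessian_transpose, transpose_mul,
    mul_assoc, hX, ← mul_assoc, hY, mul_assoc]

theorem hessian_mul_map_apply (M : Matrix σ σ k) (i l : σ) :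
    (hessian f * M.map C : Matrix σ σ (MvPolynomial σ k)) i l =
      pderiv i (∑ j, M j l • pderiv j f) := by
  simp [Matrix.mul_apply, hessian, smul_eq_C_mul, mul_comm]

theorem mul_mem_center (hX : X ∈ center f) (hY : Y ∈ center f) (hXY : X * Y = Y * X) :
    X * Y ∈ center f :=
  (transpose_hessian_mul_map_mul hX hY).trans (by rw [hXY])

theorem mul_comm_of_mem_center {d : ℕ} (hd : 3 ≤ d) (hchar : ringChar k = 0 ∨ d < ringChar k)
    (hf : f.IsHomogeneous d) (hnd : LinearIndependent k fun i => pderiv i f)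
    (hX : X ∈ center f) (hY : Y ∈ center f) : X * Y = Y * X := by
  set M := X * Y - Y * X
  set h : σ → MvPolynomial σ k := fun l => ∑ j, M j l • pderiv j f
  have hA : (hessian f * M.map C)ᵀ = -(hessian f * M.map C) := by
    rw [Matrix.map_sub _ (map_sub C), mul_sub, transpose_sub, transpose_hessian_mul_map_mul hX hY,
      transpose_hessian_mul_map_mul hY hX, neg_sub]
  have hanti : ∀ i l, pderiv i (h l) = -pderiv l (h i) := fun i l => by
    simpa only [transpose_apply, Matrix.neg_apply, hessian_mul_map_apply] using
      congr_fun (congr_fun hA l) i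
  have hh : ∀ l, (h l).IsHomogeneous (d - 1) := fun l =>
    IsHomogeneous.sum _ _ _ fun j _ => by rw [smul_eq_C_mul]; exact hf.pderiv.C_mul _
  have h0 : ∀ l, h l = 0 := eq_zero_of_pderiv_antisymm hh hanti
    (natCast_ne_zero_of_ringChar hchar (m := 2) (by omega) (by omega))
    (natCast_ne_zero_of_ringChar hchar (by omega) (by omega))
    (natCast_ne_zero_of_ringChar hchar (by omega) (by omega))
  rw [← sub_eq_zero]
  ext j l
  exact Fintype.linearIndependent_iff.mp hnd (fun j => M j l) (h0 l) j

end Center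

/-- the center of a nondegenerate form of degree `d ≥ 3` (over a field of
characteristic `0` or `> d`) contains the identity, is closed under matrix multiplication,
and is commutative; hence it is a commutative unital subalgebra of the matrix algebra. -/
theorem center_mul_mem_and_comm {k : Type*} [Field k] {n d : ℕ} (hd : 3 ≤ d)
    (hchar : ringChar k = 0 ∨ d < ringChar k)
    (f : MvPolynomial (Fin n) k) (hf : f.IsHomogeneous d)
    (hnd : LinearIndependent k fun i : Fin n => pderiv i f) :
    (1 : Matrix (Fin n) (Fin n) k) ∈ center f ∧
      ∀ X ∈ center f, ∀ Y ∈ center f, X * Y ∈ center f ∧ X * Y = Y * X := by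
  refine ⟨one_mem_center f, fun X hX Y hY => ?_⟩
  have hXY := mul_comm_of_mem_center hd hchar hf hnd hX hY
  exact ⟨mul_mem_center hX hY hXY, hXY⟩
end

section
/- Let f be a form of degree d in n variables over k, and suppose f = g₁ + g₂ where 1 ≤ a < n, g₁ is a form of degree d involving only the variables x_1,…,x_a and g₂ is a form of degree d involving only x_{a+1},…,x_n. Then the block projection matrices E₁ = diag(I_a, 0) and E₂ = diag(0, I_{n−a}) both lie in the center Z(f); moreover E₁² = E₁, E₂² = E₂, E₁E₂ = 0 and E₁ + E₂ = I_n. -/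
/-!
Each summand of `f = g₁ + g₂` misses one of the variables `xᵢ`, `xⱼ` when `i < a ≤ j`, so the
mixed partial `∂ᵢ∂ⱼ f` vanishes and the Hessian is block diagonal. A diagonal matrix that is
constant on the blocks therefore commutes with the Hessian, and since the Hessian is symmetric,
multiplying it by such a matrix keeps it symmetric.
-/

open MvPolynomial Matrix

theorem MvPolynomial.pderiv_pderiv_comm_s1 {R σ : Type*} [CommSemiring R] (i j : σ)
    (f : MvPolynomial σ R) : pderiv i (pderiv j f) = pderiv j (pderiv i f) := by
  classical
  induction f using MvPolynomial.induction_on' with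
  | add p q hp hq => simp only [map_add, hp, hq]
  | monomial s c =>
    by_cases h : i = j
    · rw [h]
    · simp only [pderiv_monomial, Finsupp.tsub_apply, Finsupp.single_apply, if_neg h,
        if_neg (Ne.symm h), tsub_zero]
      rw [tsub_right_comm, mul_right_comm]

section Hessian

variable {k σ : Type*} [Field k]

theorem hessian_add (f g : MvPolynomial σ k) : hessian (f + g) = hessian f + hessian g := by
  ext i j : 1
  simp only [hessian, of_apply, Matrix.add_apply, map_add]

theorem hessian_apply_eq_zero_of_notMem_vars {f : MvPolynomial σ k} {i j : σ}
    (h : i ∉ f.vars ∨ j ∉ f.vars) : hessian f i j = 0 := by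
  rcases h with hi | hj
  · rw [hessian, of_apply, pderiv_pderiv_comm_s1, pderiv_eq_zero_of_notMem_vars hi, map_zero]
  · rw [hessian, of_apply, pderiv_eq_zero_of_notMem_vars hj, map_zero]

theorem hessian_add_apply_eq_zero_of_vars_separated {g₁ g₂ : MvPolynomial σ k} {p : σ → Prop}
    (hv₁ : ∀ i ∈ g₁.vars, p i) (hv₂ : ∀ i ∈ g₂.vars, ¬ p i) {i j : σ} (hij : ¬ (p i ↔ p j)) :
    hessian (g₁ + g₂) i j = 0 := by
  have h₁ : hessian g₁ i j = 0 :=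
    hessian_apply_eq_zero_of_notMem_vars <| by
      by_contra! h
      exact hij (iff_of_true (hv₁ i h.1) (hv₁ j h.2))
  have h₂ : hessian g₂ i j = 0 :=
    hessian_apply_eq_zero_of_notMem_vars <| by
      by_contra! h
      exact hij (iff_of_false (hv₂ i h.1) (hv₂ j h.2))
  rw [hessian_add, Matrix.add_apply, h₁, h₂, add_zero]

theorem diagonal_mem_center [Fintype σ] [DecidableEq σ] {f : MvPolynomial σ k} {c : σ → k}
    (h : ∀ i j, c i ≠ c j → hessian f i j = 0) : diagonal c ∈ center f := by
  have hcomm : diagonal (fun i => C (c i)) * hessian f = hessian f * diagonal fun i => C (c i) := by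
    ext i j
    rw [diagonal_mul, mul_diagonal]
    by_cases hij : c i = c j
    · rw [hij, mul_comm]
    · rw [h i j hij, mul_zero, zero_mul]
  change (hessian f * (diagonal c).map C)ᵀ = hessian f * (diagonal c).map C
  rw [diagonal_map (map_zero C), transpose_mul, diagonal_transpose, hessian_transpose, hcomm]

end Hessian

theorem block_projections_mem_center_general {k : Type*} [Field k] {n a : ℕ}
    (f g₁ g₂ : MvPolynomial (Fin n) k)
    (hv₁ : ∀ i ∈ g₁.vars, (i : ℕ) < a) (hv₂ : ∀ i ∈ g₂.vars, a ≤ (i : ℕ))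
    (hsum : f = g₁ + g₂) :
    let E₁ : Matrix (Fin n) (Fin n) k := Matrix.diagonal fun i => if (i : ℕ) < a then 1 else 0
    let E₂ : Matrix (Fin n) (Fin n) k := Matrix.diagonal fun i => if (i : ℕ) < a then 0 else 1
    E₁ ∈ center f ∧ E₂ ∈ center f ∧
      E₁ * E₁ = E₁ ∧ E₂ * E₂ = E₂ ∧ E₁ * E₂ = 0 ∧ E₁ + E₂ = 1 := by
  intro E₁ E₂
  have hblock : ∀ i j : Fin n, ¬ ((i : ℕ) < a ↔ (j : ℕ) < a) → hessian f i j = 0 := fun i j hij =>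
    hsum ▸ hessian_add_apply_eq_zero_of_vars_separated hv₁ (fun i hi => not_lt.2 (hv₂ i hi)) hij
  refine ⟨diagonal_mem_center fun i j hc => hblock i j fun hiff => hc (by simp only [hiff]),
    diagonal_mem_center fun i j hc => hblock i j fun hiff => hc (by simp only [hiff]),
    ?_, ?_, ?_, ?_⟩ <;>
  · simp only [E₁, E₂, diagonal_mul_diagonal, diagonal_add, ← diagonal_one, ← diagonal_zero]
    congr 1
    funext i
    split_ifs <;> norm_num

/-- if `f = g₁ + g₂` is a direct sum with `g₁` in the variables
`x_1, …, x_a` and `g₂` in the variables `x_{a+1}, …, x_n`, then the block projections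
`E₁ = diag(I_a, 0)` and `E₂ = diag(0, I_{n-a})` are orthogonal idempotents in the center,
summing to the identity. -/
theorem block_projections_mem_center {k : Type*} [Field k] {n d a : ℕ} (hd : 3 ≤ d)
    (hchar : ringChar k = 0 ∨ d < ringChar k) (ha : 1 ≤ a) (han : a < n)
    (f g₁ g₂ : MvPolynomial (Fin n) k)
    (hg₁ : g₁.IsHomogeneous d) (hg₂ : g₂.IsHomogeneous d)
    (hv₁ : ∀ i ∈ g₁.vars, (i : ℕ) < a) (hv₂ : ∀ i ∈ g₂.vars, a ≤ (i : ℕ))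
    (hsum : f = g₁ + g₂) :
    let E₁ : Matrix (Fin n) (Fin n) k := Matrix.diagonal fun i => if (i : ℕ) < a then 1 else 0
    let E₂ : Matrix (Fin n) (Fin n) k := Matrix.diagonal fun i => if (i : ℕ) < a then 0 else 1
    E₁ ∈ center f ∧ E₂ ∈ center f ∧
      E₁ * E₁ = E₁ ∧ E₂ * E₂ = E₂ ∧ E₁ * E₂ = 0 ∧ E₁ + E₂ = 1 :=
  block_projections_mem_center_general f g₁ g₂ hv₁ hv₂ hsum
end

section
/- Let k be a field with char k = 0 or char k > 3, and let f = a·x₁³ + b·x₁²x₂ + c·x₁x₂² + e·x₂³ be a nondegenerate binary cubic form over k. Then dim_k Z(f) = 2. In particular, no nondegenerate binary cubic form is central. -/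
open MvPolynomial Matrix

/-- The center of a form `f`, as a `k`-subspace of the matrix algebra. -/
noncomputable def centerSubmodule {k : Type*} [Field k] {σ : Type*} [Fintype σ]
    (f : MvPolynomial σ k) : Submodule k (Matrix σ σ k) where
  carrier := center f
  add_mem' := by
    intro X Y hX hY
    have hmap : (X + Y).map (C : k → MvPolynomial σ k) = X.map C + Y.map C := by
      ext i j; simp [Matrix.map_apply]
    simp only [center, Set.mem_setOf_eq] at *
    rw [hmap, Matrix.mul_add, Matrix.transpose_add, hX, hY]
  zero_mem' := by
    have hmap : (0 : Matrix σ σ k).map (C : k → MvPolynomial σ k) = 0 := by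
      ext i j; simp [Matrix.map_apply]
    simp only [center, Set.mem_setOf_eq]
    rw [hmap, Matrix.mul_zero, Matrix.transpose_zero]
  smul_mem' := by
    intro c X hX
    have hmap : (c • X).map (C : k → MvPolynomial σ k)
        = (C c : MvPolynomial σ k) • X.map C := by
      ext i j; simp [Matrix.map_apply, smul_eq_mul]
    simp only [center, Set.mem_setOf_eq] at *
    rw [hmap, Matrix.mul_smul, Matrix.transpose_smul, hX]


/-!
The Hessian of a binary cubic is linear, `H = x₀ • A₀ + x₁ • A₁` with constant symmetric `A₀, A₁`,
so `M` is in the center iff `A₀ * M` and `A₁ * M` are symmetric. These are two linear equations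
in `M`, which see `M` only through `(2 M₀₁, M₁₁ - M₀₀, -2 M₁₀)` and whose coefficient rows are
the coefficient vectors of `∂₀f` and `∂₁f`. Nondegeneracy makes the two equations independent
and `2 ≠ 0` makes the coordinate map onto `k³`, so the center has dimension `4 - 2 = 2` and is
strictly larger than the line of scalar matrices.
-/

section

variable {k : Type*} [Field k]

local notation "k[x₀,x₁]" => MvPolynomial (Fin 2) k

theorem Matrix.isSymm_fin_two_iff {α : Type*} {A : Matrix (Fin 2) (Fin 2) α} :
    A.IsSymm ↔ A 0 1 = A 1 0 := by
  simp [IsSymm.ext_iff, Fin.forall_fin_two, eq_comm]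

theorem Matrix.mulVecLin_surjective_of_linearIndependent_row {m n : Type*}
    [Fintype m] [Fintype n] {A : Matrix m n k} (h : LinearIndependent k A.row) :
    Function.Surjective A.mulVecLin := by
  rw [← LinearMap.range_eq_top]
  apply Submodule.eq_top_of_finrank_eq
  rw [← Matrix.rank, h.rank_matrix, Module.finrank_fintype_fun_eq_card]

theorem center_ne_scalars_of_one_lt_finrank {σ : Type*} [Fintype σ] [DecidableEq σ]
    {f : MvPolynomial σ k} (h : 1 < Module.finrank k (centerSubmodule f)) :
    center f ≠ Set.range fun lam : k => lam • (1 : Matrix σ σ k) := by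
  intro hscalar
  have hle : centerSubmodule f ≤ Submodule.span k {1} := fun M hM => by
    have hM' : M ∈ center f := hM
    rw [hscalar] at hM'
    obtain ⟨lam, rfl⟩ := hM'
    exact Submodule.smul_mem _ lam (Submodule.subset_span rfl)
  have hle' := (Submodule.finrank_mono hle).trans (finrank_span_le_card {1})
  simp only [Set.toFinset_singleton, Finset.card_singleton] at hle'
  omega

noncomputable def binaryCubic (a b c e : k) : k[x₀,x₁] :=
  C a * X 0 ^ 3 + C b * X 0 ^ 2 * X 1 + C c * X 0 * X 1 ^ 2 + C e * X 1 ^ 3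

namespace binaryCubic

/-- Row `i` holds the coefficients of `∂ᵢ f` at the monomials `x₀², x₀x₁, x₁²`. -/
def partialCoeffs (a b c e : k) : Matrix (Fin 2) (Fin 3) k :=
  !![3 * a, 2 * b, c; b, 2 * c, 3 * e]

def centerCoords : Matrix (Fin 2) (Fin 2) k →ₗ[k] Fin 3 → k where
  toFun M := ![2 * M 0 1, M 1 1 - M 0 0, -(2 * M 1 0)]
  map_add' M N := by
    funext i
    fin_cases i <;> simp <;> ring
  map_smul' r M := by
    funext i
    fin_cases i <;> simp <;> ring

theorem centerCoords_surjective (h2 : (2 : k) ≠ 0) :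
    Function.Surjective (centerCoords : Matrix (Fin 2) (Fin 2) k →ₗ[k] Fin 3 → k) := by
  intro w
  refine ⟨!![0, w 0 / 2; -(w 2 / 2), w 1], ?_⟩
  funext i
  fin_cases i <;> simp [centerCoords, mul_div_cancel₀ _ h2]

end binaryCubic

open binaryCubic

theorem pderiv_binaryCubic (a b c e : k) (i : Fin 2) :
    pderiv i (binaryCubic a b c e) =
      Fintype.linearCombination k ![X 0 ^ 2, X 0 * X 1, X 1 ^ 2] (partialCoeffs a b c e i) := by
  rw [Fintype.linearCombination_apply]
  fin_cases i <;>
    simp [binaryCubic, partialCoeffs, Fin.sum_univ_three, smul_eq_C_mul, map_ofNat] <;>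
    ring

theorem hessian_binaryCubic (a b c e : k) :
    hessian (binaryCubic a b c e) =
      (X 0 : k[x₀,x₁]) • (!![6 * a, 2 * b; 2 * b, 2 * c]).map C +
        (X 1 : k[x₀,x₁]) • (!![2 * b, 2 * c; 2 * c, 6 * e]).map C := by
  ext i j : 1
  fin_cases i <;> fin_cases j <;>
    simp [hessian, pderiv_binaryCubic, Fintype.linearCombination_apply, Fin.sum_univ_three,
      partialCoeffs, smul_eq_C_mul, map_ofNat] <;> ring

theorem map_eval_smul_X_add_smul_X {m n : Type*} (P Q : Matrix m n k) (v : Fin 2 → k) :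
    Matrix.map ((X 0 : k[x₀,x₁]) • P.map (C : k → k[x₀,x₁]) + (X 1 : k[x₀,x₁]) • Q.map C)
        (eval v) = v 0 • P + v 1 • Q := by
  ext i j
  simp

theorem smul_X_add_smul_X_map_C_inj {m n : Type*} {P Q P' Q' : Matrix m n k} :
    (X 0 : k[x₀,x₁]) • P.map (C : k → k[x₀,x₁]) + (X 1 : k[x₀,x₁]) • Q.map C =
        (X 0 : k[x₀,x₁]) • P'.map (C : k → k[x₀,x₁]) + (X 1 : k[x₀,x₁]) • Q'.map C ↔
      P = P' ∧ Q = Q' := by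
  refine ⟨fun h => ⟨?_, ?_⟩, fun ⟨hP, hQ⟩ => hP ▸ hQ ▸ rfl⟩
  · simpa [map_eval_smul_X_add_smul_X] using congrArg (Matrix.map · (eval ![1, 0])) h
  · simpa [map_eval_smul_X_add_smul_X] using congrArg (Matrix.map · (eval ![0, 1])) h

theorem mem_center_binaryCubic_iff (a b c e : k) (M : Matrix (Fin 2) (Fin 2) k) :
    M ∈ center (binaryCubic a b c e) ↔
      (!![6 * a, 2 * b; 2 * b, 2 * c] * M).IsSymm ∧
        (!![2 * b, 2 * c; 2 * c, 6 * e] * M).IsSymm := by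
  simp only [center, Set.mem_ofPred_eq, hessian_binaryCubic, Matrix.add_mul, Matrix.smul_mul,
    ← Matrix.map_mul, Matrix.transpose_add, Matrix.transpose_smul]
  exact smul_X_add_smul_X_map_C_inj

theorem centerSubmodule_binaryCubic (a b c e : k) :
    centerSubmodule (binaryCubic a b c e) =
      LinearMap.ker ((partialCoeffs a b c e).mulVecLin ∘ₗ centerCoords) := by
  ext M
  rw [LinearMap.mem_ker, LinearMap.comp_apply, Matrix.mulVecLin_apply]
  change M ∈ center _ ↔ _
  rw [mem_center_binaryCubic_iff, isSymm_fin_two_iff, isSymm_fin_two_iff, funext_iff,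
    Fin.forall_fin_two]
  simp only [Matrix.mul_apply, Fin.sum_univ_two, Fin.sum_univ_three, mulVec, dotProduct,
    partialCoeffs, centerCoords, LinearMap.coe_mk, AddHom.coe_mk, of_apply, cons_val',
    cons_val_fin_one, cons_val_zero, cons_val_one, cons_val, mul_neg, Pi.zero_apply]
  constructor <;> rintro ⟨h0, h1⟩ <;> exact ⟨by linear_combination h0, by linear_combination h1⟩

theorem linearIndependent_partialCoeffs_row {a b c e : k}
    (hnd : LinearIndependent k fun i : Fin 2 => pderiv i (binaryCubic a b c e)) :
    LinearIndependent k (partialCoeffs a b c e).row := by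
  refine LinearIndependent.of_comp
    (Fintype.linearCombination k (![X 0 ^ 2, X 0 * X 1, X 1 ^ 2] : Fin 3 → k[x₀,x₁])) ?_
  convert hnd using 1
  funext i
  exact (pderiv_binaryCubic a b c e i).symm

theorem finrank_centerSubmodule_binaryCubic (h2 : (2 : k) ≠ 0) {a b c e : k}
    (hnd : LinearIndependent k fun i : Fin 2 => pderiv i (binaryCubic a b c e)) :
    Module.finrank k (centerSubmodule (binaryCubic a b c e)) = 2 := by
  have hsurj := (mulVecLin_surjective_of_linearIndependent_row
    (linearIndependent_partialCoeffs_row hnd)).comp (centerCoords_surjective h2)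
  have hrank := LinearMap.finrank_range_add_finrank_ker
    ((partialCoeffs a b c e).mulVecLin ∘ₗ centerCoords)
  rw [LinearMap.range_eq_top.mpr hsurj] at hrank
  rw [centerSubmodule_binaryCubic]
  simp only [finrank_top, Module.finrank_fintype_fun_eq_card, Fintype.card_fin,
    Module.finrank_matrix, Module.finrank_self] at hrank
  omega

end

/-- every nondegenerate binary cubic form has a 2-dimensional center;
in particular no nondegenerate binary cubic is central. -/
theorem binary_cubic_center_dim_two {k : Type*} [Field k]
    (hchar : ringChar k = 0 ∨ 3 < ringChar k) (a b c e : k)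
    (f : MvPolynomial (Fin 2) k)
    (hf : f = C a * X 0 ^ 3 + C b * X 0 ^ 2 * X 1 + C c * X 0 * X 1 ^ 2 + C e * X 1 ^ 3)
    (hnd : LinearIndependent k fun i : Fin 2 => pderiv i f) :
    Module.finrank k (centerSubmodule f) = 2 ∧
      center f ≠ Set.range (fun lam : k => lam • (1 : Matrix (Fin 2) (Fin 2) k)) := by
  have h2 : (2 : k) ≠ 0 := Ring.two_ne_zero (by omega)
  obtain rfl : f = binaryCubic a b c e := hf
  have hdim := finrank_centerSubmodule_binaryCubic h2 hnd
  exact ⟨hdim, center_ne_scalars_of_one_lt_finrank (by omega)⟩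
end

section
/- Let n ≥ 2 and d ≥ 3 satisfy one of: (n = 2 and d ≥ 5), (n ≥ 3 and d ≥ 4), or (n ≥ 4 and d = 3). Let f = x₁x₂^{d−1} + x₂x₃^{d−1} + ⋯ + x_{n−1}x_n^{d−1} + x_n x₁^{d−1} ∈ k[x_1,…,x_n]. Then f is central: Z(f) = k·I_n. -/
open MvPolynomial Matrix

section Aux
variable {k : Type*} [Field k] {n d : ℕ} [NeZero n]

lemma succ_eq (hn : 0 < n) (i : Fin n) :
    (⟨((i : ℕ) + 1) % n, Nat.mod_lt _ hn⟩ : Fin n) = i + 1 := by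
  simp [Fin.ext_iff, Fin.val_add, Fin.val_one']

lemma add_one_ne (hn2 : 2 ≤ n) (a : Fin n) : a + 1 ≠ a := by
  simp [Fin.ext_iff, Fin.val_add, Fin.val_one']
  omega

lemma sub_one_ne (hn2 : 2 ≤ n) (a : Fin n) : a - 1 ≠ a := by
  intro h
  exact add_one_ne hn2 (a-1) (by rw [sub_add_cancel, h])

omit [NeZero n] in
lemma pdX (i j : Fin n) : pderiv i (X j : MvPolynomial (Fin n) k) = if i = j then 1 else 0 := by
  by_cases h : i = j
  · subst h; simp
  · rw [pderiv_X_of_ne (Ne.symm h), if_neg h]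
lemma pd1 (hn2 : 2 ≤ n) (l : Fin n) :
    pderiv l (∑ a : Fin n, (X a * X (a+1) ^ (d-1) : MvPolynomial (Fin n) k)) =
      X (l+1)^(d-1) + ((d-1 : ℕ) : MvPolynomial (Fin n) k) * (X (l-1) * X l^(d-2)) := by
  rw [map_sum]
  have hd21 : d - 1 - 1 = d - 2 := by omega
  have h1 : ∀ a : Fin n, pderiv l ((X a * X (a+1) ^ (d-1) : MvPolynomial (Fin n) k)) =
      (if a = l then X (a+1)^(d-1) else 0)
      + (if a = l - 1 then ((d-1:ℕ) : MvPolynomial (Fin n) k) * (X a * X (a+1)^(d-2)) else 0) := by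
    intro a
    rw [pderiv_mul, pderiv_pow, pderiv_X, pderiv_X, hd21]
    have hc : a = l - 1 ↔ a + 1 = l := by constructor <;> intro h <;> [rw [h]; rw [← h]] <;> simp
    by_cases h2 : a = l - 1
    · have h3 : a + 1 = l := hc.mp h2
      have h : a ≠ l := by rw [← h3]; exact (add_one_ne hn2 a).symm
      rw [if_neg h, if_pos h2]
      simp [Pi.single_apply, h, h3]
      ring
    · have h3 : a + 1 ≠ l := fun hh => h2 (hc.mpr hh)
      by_cases h : a = l
      · subst h
        rw [if_pos rfl, if_neg h2]
        simp [Pi.single_apply, h3]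
      · rw [if_neg h, if_neg h2]
        simp [Pi.single_apply, h, h3]
  rw [Finset.sum_congr rfl (fun a _ => h1 a), Finset.sum_add_distrib,
    Finset.sum_ite_eq' Finset.univ l, Finset.sum_ite_eq' Finset.univ (l-1)]
  simp [sub_add_cancel]

lemma hess_apply (hn2 : 2 ≤ n) (i l : Fin n) :
    hessian (∑ a : Fin n, (X a * X (a+1) ^ (d-1) : MvPolynomial (Fin n) k)) i l =
      (if i = l + 1 then ((d-1:ℕ) : MvPolynomial (Fin n) k) * X i ^ (d-2) else 0)
      + (if l = i + 1 then ((d-1:ℕ) : MvPolynomial (Fin n) k) * X l ^ (d-2) else 0)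
      + (if i = l then ((d-1:ℕ) : MvPolynomial (Fin n) k) * ((d-2:ℕ) : MvPolynomial (Fin n) k)
            * (X (i-1) * X i ^ (d-3)) else 0) := by
  have hC : pderiv i (((d-1:ℕ)) : MvPolynomial (Fin n) k) = 0 := by
    rw [← map_natCast (C : k →+* MvPolynomial (Fin n) k) (d-1)]; exact pderiv_C
  show pderiv i (pderiv l _) = _
  rw [pd1 hn2 l, map_add, pderiv_pow, pdX, pderiv_mul, hC, zero_mul, zero_add, pderiv_mul,
    pderiv_pow, pdX, pdX, show d - 1 - 1 = d - 2 by omega, show d - 2 - 1 = d - 3 by omega]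
  have hc : (i = l - 1) = (l = i + 1) := by
    apply propext; constructor <;> intro h
    · rw [h, sub_add_cancel]
    · rw [h, add_sub_cancel_right]
  simp only [hc]
  by_cases h3 : i = l
  · subst h3
    have e1 : ¬ (i = i + 1) := fun h => add_one_ne hn2 i h.symm
    rw [if_neg e1, if_neg e1, if_pos rfl, if_pos rfl]
    ring
  · rw [if_neg h3, if_neg h3]
    by_cases h1 : i = l + 1 <;> by_cases h2 : l = i + 1
    · rw [if_pos h1, if_pos h2, if_pos h1, if_pos h2, ← h1]; ring
    · rw [if_pos h1, if_neg h2, if_pos h1, if_neg h2, ← h1]; ring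
    · rw [if_neg h1, if_pos h2, if_neg h1, if_pos h2]; ring
    · rw [if_neg h1, if_neg h2, if_neg h1, if_neg h2]; ring

/-- behead: the matrix-product entry in closed form -/
lemma sum_entry (hn2 : 2 ≤ n) (x : Matrix (Fin n) (Fin n) k) (i j : Fin n) :
    ∑ l : Fin n, hessian (∑ a : Fin n, (X a * X (a+1) ^ (d-1) : MvPolynomial (Fin n) k)) i l
        * C (x l j) =
      ((d-1:ℕ) : MvPolynomial (Fin n) k) *
        (C (x (i-1) j) * X i ^ (d-2) + C (x (i+1) j) * X (i+1) ^ (d-2)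
          + ((d-2:ℕ) : MvPolynomial (Fin n) k) * (C (x i j) * (X (i-1) * X i ^ (d-3)))) := by
  have h1 : ∀ l : Fin n,
      hessian (∑ a : Fin n, (X a * X (a+1) ^ (d-1) : MvPolynomial (Fin n) k)) i l * C (x l j)
      = (if l = i - 1 then ((d-1:ℕ) : MvPolynomial (Fin n) k) * X i ^ (d-2) * C (x l j) else 0)
        + (if l = i + 1 then ((d-1:ℕ) : MvPolynomial (Fin n) k) * X l ^ (d-2) * C (x l j) else 0)
        + (if l = i then ((d-1:ℕ) : MvPolynomial (Fin n) k) * ((d-2:ℕ) : MvPolynomial (Fin n) k)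
            * (X (i-1) * X i ^ (d-3)) * C (x l j) else 0) := by
    intro l
    rw [hess_apply hn2 i l, add_mul, add_mul]
    congr 1
    · congr 1
      · have hc : (i = l + 1) = (l = i - 1) := by
          apply propext; constructor <;> intro h
          · rw [h, add_sub_cancel_right]
          · rw [h, sub_add_cancel]
        simp only [hc, ite_mul, zero_mul]
      · simp only [ite_mul, zero_mul]
    · have hc : (i = l) = (l = i) := by apply propext; exact eq_comm
      simp only [hc, ite_mul, zero_mul]
  rw [Finset.sum_congr rfl (fun l _ => h1 l), Finset.sum_add_distrib, Finset.sum_add_distrib,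
    Finset.sum_ite_eq' Finset.univ (i-1), Finset.sum_ite_eq' Finset.univ (i+1),
    Finset.sum_ite_eq' Finset.univ i]
  simp only [Finset.mem_univ, if_true]
  ring

lemma XXpow (a b : Fin n) (e : ℕ) :
    (X a * X b ^ e : MvPolynomial (Fin n) k)
      = monomial (Finsupp.single a 1 + Finsupp.single b e) 1 := by
  rw [X_pow_eq_monomial, X, monomial_mul, one_mul]

lemma coeff_natCast_mul (c : ℕ) (m : Fin n →₀ ℕ) (p : MvPolynomial (Fin n) k) :
    coeff m ((c : MvPolynomial (Fin n) k) * p) = (c : k) * coeff m p := by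
  rw [← map_natCast (C : k →+* MvPolynomial (Fin n) k) c, coeff_C_mul]

lemma coeffQ (x : Matrix (Fin n) (Fin n) k) (i j : Fin n) (m : Fin n →₀ ℕ) :
    coeff m (((d-1:ℕ) : MvPolynomial (Fin n) k) *
        (C (x (i-1) j) * X i ^ (d-2) + C (x (i+1) j) * X (i+1) ^ (d-2)
          + ((d-2:ℕ) : MvPolynomial (Fin n) k) * (C (x i j) * (X (i-1) * X i ^ (d-3)))))
      = ((d-1:ℕ) : k) *
        ((if Finsupp.single i (d-2) = m then 1 else 0) * x (i-1) j
        + (if Finsupp.single (i+1) (d-2) = m then 1 else 0) * x (i+1) j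
        + ((d-2:ℕ) : k) *
          ((if Finsupp.single (i-1) 1 + Finsupp.single i (d-3) = m then 1 else 0) * x i j)) := by
  rw [coeff_natCast_mul]
  congr 1
  rw [coeff_add, coeff_add, coeff_C_mul, coeff_C_mul, coeff_natCast_mul, coeff_C_mul,
    coeff_X_pow, coeff_X_pow, XXpow, coeff_monomial]
  ring


lemma val_one (hn2 : 2 ≤ n) : (1 : Fin n).val = 1 := by
  rw [Fin.val_one', Nat.mod_eq_of_lt (by omega)]

lemma two_ne (hn3 : 3 ≤ n) (a : Fin n) : a + 1 + 1 ≠ a := by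
  intro h
  rw [add_assoc, add_eq_left] at h
  have hv : ((1 + 1 : Fin n)).val = 2 := by
    rw [Fin.val_add, val_one (by omega), Nat.mod_eq_of_lt (by omega)]
  rw [h] at hv
  simp at hv

lemma three_ne (hn4 : 4 ≤ n) (a : Fin n) : a + 1 + 1 + 1 ≠ a := by
  intro h
  rw [add_assoc, add_assoc, add_eq_left] at h
  have h2 : ((1 + 1 : Fin n)).val = 2 := by
    rw [Fin.val_add, val_one (by omega), Nat.mod_eq_of_lt (by omega)]
  have hv : ((1 + (1 + 1) : Fin n)).val = 3 := by
    rw [Fin.val_add, h2, val_one (by omega), Nat.mod_eq_of_lt (by omega)]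
  rw [h] at hv
  simp at hv

lemma sub_sub_ne (hn3 : 3 ≤ n) (a : Fin n) : a - 1 - 1 ≠ a := by
  intro h
  exact two_ne hn3 (a-1-1) (by rw [sub_add_cancel, sub_add_cancel, h])

lemma add_sub_ne (hn3 : 3 ≤ n) (a : Fin n) : a + 1 ≠ a - 1 := by
  intro h
  exact two_ne hn3 (a-1) (by rw [sub_add_cancel, ← h])

lemma cast_ne_zero {m : ℕ} (hchar : ringChar k = 0 ∨ d < ringChar k)
    (h0 : m ≠ 0) (hm : m ≤ d) : ((m:ℕ):k) ≠ 0 := by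
  haveI := ringChar.charP k
  intro h
  have hdvd := (CharP.cast_eq_zero_iff k (ringChar k) m).mp h
  rcases hchar with h1 | h1
  · rw [h1, zero_dvd_iff] at hdvd; exact h0 hdvd
  · have := Nat.le_of_dvd (Nat.pos_of_ne_zero h0) hdvd
    omega

lemma diag_const (hn2 : 2 ≤ n) (x : Matrix (Fin n) (Fin n) k)
    (h : ∀ j : Fin n, x j j = x (j+1) (j+1)) : ∀ a : Fin n, x a a = x 0 0 := by
  have key : ∀ m (hm : m < n), x ⟨m, hm⟩ ⟨m, hm⟩ = x 0 0 := by
    intro m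
    induction m with
    | zero => intro hm; congr 1 <;> exact Fin.ext rfl
    | succ p ih =>
      intro hm
      have hp : p < n := by omega
      have he : (⟨p+1, hm⟩ : Fin n) = ⟨p, hp⟩ + 1 := by
        apply Fin.ext
        rw [Fin.val_add, val_one hn2, Nat.mod_eq_of_lt hm]
      rw [he, ← h ⟨p, hp⟩, ih hp]
  intro a
  exact key a a.isLt

lemma Bne (hn2 : 2 ≤ n) (hd4 : 4 ≤ d) (a t : Fin n) :
    Finsupp.single (a-1) 1 + Finsupp.single a (d-3) ≠ Finsupp.single t (d-2) := by
  intro h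
  have h1 := DFunLike.congr_fun h (a-1)
  rw [Finsupp.add_apply, Finsupp.single_apply, Finsupp.single_apply, Finsupp.single_apply,
    if_pos rfl, if_neg (fun hh : a = a - 1 => sub_one_ne hn2 a hh.symm)] at h1
  by_cases ht : t = a - 1
  · rw [if_pos ht] at h1; omega
  · rw [if_neg ht] at h1; omega

lemma Binj (hn2 : 2 ≤ n) (hd4 : 4 ≤ d) (hextra : 3 ≤ n ∨ 5 ≤ d) {a b : Fin n}
    (h : Finsupp.single (a-1) 1 + Finsupp.single a (d-3)
        = Finsupp.single (b-1) 1 + Finsupp.single b (d-3)) : a = b := by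
  by_contra hab
  have h1 := DFunLike.congr_fun h a
  rw [Finsupp.add_apply, Finsupp.add_apply, Finsupp.single_apply, Finsupp.single_apply,
    Finsupp.single_apply, Finsupp.single_apply, if_pos rfl,
    if_neg (sub_one_ne hn2 a), if_neg (fun hh : b = a => hab hh.symm)] at h1
  -- h1 : d - 3 = (if b - 1 = a then 1 else 0) + 0
  by_cases hba : b - 1 = a
  · rw [if_pos hba] at h1
    -- d - 3 = 1, so d = 4; then 3 ≤ n
    have hn3 : 3 ≤ n := by rcases hextra with h' | h'; exact h'; omega
    have h2 := DFunLike.congr_fun h b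
    rw [Finsupp.add_apply, Finsupp.add_apply, Finsupp.single_apply, Finsupp.single_apply,
      Finsupp.single_apply, Finsupp.single_apply, if_pos rfl,
      if_neg (sub_one_ne hn2 b), if_neg hab] at h2
    -- h2 : (if a - 1 = b then 1 else 0) + 0 = d - 3
    by_cases hableft : a - 1 = b
    · -- a - 1 = b and b - 1 = a : contradiction for n ≥ 3
      apply sub_sub_ne hn3 a
      rw [hableft, hba]
    · rw [if_neg hableft] at h2; omega
  · rw [if_neg hba] at h1; omega
end Aux


/-- the cyclic form
`f = x₁x₂^{d-1} + x₂x₃^{d-1} + ⋯ + x_{n-1}x_n^{d-1} + x_nx₁^{d-1}` is central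
whenever `(n = 2 ∧ d ≥ 5)`, `(n ≥ 3 ∧ d ≥ 4)` or `(n ≥ 4 ∧ d = 3)`. -/
theorem cyclic_form_is_central {k : Type*} [Field k] {n d : ℕ} (hn : 0 < n)
    (hchar : ringChar k = 0 ∨ d < ringChar k)
    (hcase : (n = 2 ∧ 5 ≤ d) ∨ (3 ≤ n ∧ 4 ≤ d) ∨ (4 ≤ n ∧ d = 3))
    (f : MvPolynomial (Fin n) k)
    (hf : f = ∑ i : Fin n,
      X i * X (⟨((i : ℕ) + 1) % n, Nat.mod_lt _ hn⟩ : Fin n) ^ (d - 1)) :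
    center f = Set.range (fun lam : k => lam • (1 : Matrix (Fin n) (Fin n) k)) := by
  have hn2 : 2 ≤ n := by rcases hcase with ⟨h,_⟩|⟨h,_⟩|⟨h,_⟩ <;> omega
  haveI : NeZero n := ⟨by omega⟩
  have hd3 : 3 ≤ d := by rcases hcase with ⟨_,h⟩|⟨_,h⟩|⟨_,h⟩ <;> omega
  have hf' : f = ∑ a : Fin n, X a * X (a+1) ^ (d-1) := by
    rw [hf]; exact Finset.sum_congr rfl fun i _ => by rw [succ_eq hn i]
  clear hf
  subst hf'
  have hd1ne : ((d-1:ℕ):k) ≠ 0 := cast_ne_zero hchar (by omega) (by omega)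
  have hd2ne : ((d-2:ℕ):k) ≠ 0 := cast_ne_zero hchar (by omega) (by omega)
  have hsym : (hessian (∑ a : Fin n, (X a * X (a+1) ^ (d-1) : MvPolynomial (Fin n) k)))ᵀ
      = hessian (∑ a : Fin n, (X a * X (a+1) ^ (d-1) : MvPolynomial (Fin n) k)) := by
    ext i l
    rw [transpose_apply, hess_apply hn2 l i, hess_apply hn2 i l]
    by_cases h : i = l
    · subst h; ring
    · rw [if_neg (fun hh : l = i => h hh.symm), if_neg h]
      ring
  ext x
  simp only [center, Set.mem_setOf_eq, Set.mem_range]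
  constructor
  · intro hx
    -- the key coefficient equations
    have key : ∀ (i j : Fin n) (m : Fin n →₀ ℕ),
        (if Finsupp.single i (d-2) = m then (1:k) else 0) * x (i-1) j
        + (if Finsupp.single (i+1) (d-2) = m then (1:k) else 0) * x (i+1) j
        + ((d-2:ℕ):k) * ((if Finsupp.single (i-1) 1 + Finsupp.single i (d-3) = m
              then (1:k) else 0) * x i j)
        = (if Finsupp.single j (d-2) = m then (1:k) else 0) * x (j-1) i
        + (if Finsupp.single (j+1) (d-2) = m then (1:k) else 0) * x (j+1) i
        + ((d-2:ℕ):k) * ((if Finsupp.single (j-1) 1 + Finsupp.single j (d-3) = m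
              then (1:k) else 0) * x j i) := by
      intro i j m
      have h1 : (hessian (∑ a : Fin n, (X a * X (a+1) ^ (d-1) : MvPolynomial (Fin n) k))
            * x.map (C : k → MvPolynomial (Fin n) k)) i j
          = (hessian (∑ a : Fin n, (X a * X (a+1) ^ (d-1) : MvPolynomial (Fin n) k))
            * x.map (C : k → MvPolynomial (Fin n) k)) j i := by
        conv_rhs => rw [← hx]
        exact (transpose_apply _ j i).symm
      rw [mul_apply, mul_apply] at h1
      simp only [Matrix.map_apply] at h1
      rw [sum_entry hn2 x i j, sum_entry hn2 x j i] at h1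
      have h2 := congrArg (MvPolynomial.coeff m) h1
      rw [coeffQ x i j m, coeffQ x j i m] at h2
      exact mul_left_cancel₀ hd1ne h2
    -- off-diagonal vanishing and diagonal constancy
    have main : (∀ i j : Fin n, i ≠ j → x i j = 0) ∧ (∀ j : Fin n, x j j = x (j+1) (j+1)) := by
      rcases hcase with ⟨hc1, hc2⟩ | ⟨hc1, hc2⟩ | ⟨hc1, hc2⟩
      rotate_right
      · -- d = 3, n ≥ 4
        subst hc2
        have hn3 : 3 ≤ n := by omega
        have key3 : ∀ i j t : Fin n,
            (if i = t then x (i-1) j else 0) + (if i+1 = t then x (i+1) j else 0)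
              + (if i-1 = t then x i j else 0)
            = (if j = t then x (j-1) i else 0) + (if j+1 = t then x (j+1) i else 0)
              + (if j-1 = t then x j i else 0) := by
          intro i j t
          have h := key i j (Finsupp.single t 1)
          simp only [show (3-2 : ℕ) = 1 by norm_num, show (3-3 : ℕ) = 0 by norm_num,
            Finsupp.single_zero, add_zero,
            Finsupp.single_left_inj (one_ne_zero : (1:ℕ) ≠ 0), Nat.cast_one, one_mul,
            ite_mul, zero_mul] at h
          exact h
        have V : ∀ a b : Fin n, x a b = (if b = a-1 then x (b-1) a else 0)
            + (if b+1 = a-1 then x (b+1) a else 0) + (if b = a then x b a else 0) := by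
          intro a b
          have h := key3 a b (a-1)
          rw [if_neg (fun hh : a = a-1 => sub_one_ne hn2 a hh.symm),
            if_neg (add_sub_ne hn3 a), if_pos rfl] at h
          simp only [sub_left_inj] at h
          rw [zero_add, zero_add] at h
          exact h
        have S1 : ∀ a : Fin n, x (a-1) a = 0 := by
          intro a
          have h := V (a-1) a
          rw [if_neg (fun hh : a = a-1-1 => sub_sub_ne hn3 a hh.symm),
            if_neg (fun hh : a+1 = a-1-1 => three_ne hc1 a
              (by rw [hh, sub_add_cancel, sub_add_cancel])),
            if_neg (fun hh : a = a-1 => sub_one_ne hn2 a hh.symm)] at h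
          simpa using h
        have S2 : ∀ a : Fin n, x a (a-1-1) = 0 := by
          intro a
          have h := V a (a-1-1)
          rw [if_neg (fun hh : a-1-1 = a-1 => sub_one_ne hn2 (a-1) hh),
            if_pos (show a-1-1+1 = a-1 by rw [sub_add_cancel]),
            if_neg (fun hh : a-1-1 = a => sub_sub_ne hn3 a hh)] at h
          rw [sub_add_cancel, S1 a] at h
          simpa using h
        have S3 : ∀ a : Fin n, x a (a-1) = 0 := by
          intro a
          have h := V a (a-1)
          rw [if_pos rfl,
            if_neg (fun hh : (a-1)+1 = a-1 =>
              sub_one_ne hn2 a (by rw [sub_add_cancel] at hh; exact hh.symm)),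
            if_neg (fun hh : a-1 = a => sub_one_ne hn2 a hh)] at h
          have h3 : x (a-1-1) a = 0 := by
            have h2 := V (a-1-1) a
            rw [if_neg (fun hh : a = a-1-1-1 => three_ne hc1 a
                (by conv_lhs => rw [hh, sub_add_cancel, sub_add_cancel, sub_add_cancel])),
              if_neg (fun hh : a = a-1-1 => sub_sub_ne hn3 a hh.symm)] at h2
            by_cases hcrit : a + 1 = a-1-1-1
            · rw [if_pos hcrit, hcrit, S1 (a-1-1)] at h2
              simpa using h2
            · rw [if_neg hcrit] at h2
              simpa using h2
          rw [h3] at h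
          simpa using h
        constructor
        · intro i j hij
          by_cases hb1 : j = i - 1
          · rw [hb1]; exact S3 i
          by_cases hb2 : j = i - 1 - 1
          · rw [hb2]; exact S2 i
          have h := V i j
          rw [if_neg hb1,
            if_neg (fun hh : j + 1 = i - 1 => hb2 (by rw [← hh, add_sub_cancel_right])),
            if_neg (fun hh : j = i => hij hh.symm)] at h
          simpa using h
        · intro j
          have h := key3 (j+1) j (j+1)
          rw [if_pos rfl, if_neg (add_one_ne hn2 (j+1)),
            if_neg (fun hh : (j+1)-1 = j+1 => sub_one_ne hn2 (j+1) hh),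
            if_neg (fun hh : j = j+1 => add_one_ne hn2 j hh.symm),
            if_neg (fun hh : j-1 = j+1 => add_sub_ne hn3 j hh.symm),
            add_sub_cancel_right] at h
          simpa using h
      all_goals {
        -- d ≥ 4 cases
        have hd4 : 4 ≤ d := by omega
        have hextra : 3 ≤ n ∨ 5 ≤ d := by omega
        constructor
        · intro i j hij
          have h := key i j (Finsupp.single (i-1) 1 + Finsupp.single i (d-3))
          rw [if_neg (Bne hn2 hd4 i i).symm, if_neg (Bne hn2 hd4 i (i+1)).symm, if_pos rfl,
            if_neg (Bne hn2 hd4 i j).symm, if_neg (Bne hn2 hd4 i (j+1)).symm,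
            if_neg (fun hh => hij (Binj hn2 hd4 hextra hh).symm)] at h
          simp only [zero_mul, one_mul, mul_zero, add_zero, zero_add] at h
          exact (mul_eq_zero.mp h).resolve_left hd2ne
        · intro j
          have h := key (j+1) j (Finsupp.single (j+1) (d-2))
          rw [if_pos rfl,
            if_neg (fun hh => add_one_ne hn2 (j+1)
              ((Finsupp.single_left_inj (by omega : d-2 ≠ 0)).mp hh)),
            if_neg (Bne hn2 hd4 (j+1) (j+1)),
            if_neg (fun hh => add_one_ne hn2 j
              ((Finsupp.single_left_inj (by omega : d-2 ≠ 0)).mp hh).symm),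
            if_neg (Bne hn2 hd4 j (j+1)),
            add_sub_cancel_right] at h
          simpa using h
      }
    obtain ⟨hoff, hdiag⟩ := main
    refine ⟨x 0 0, ?_⟩
    ext i j
    by_cases h : i = j
    · subst h
      simp only [Matrix.smul_apply, Matrix.one_apply_eq, smul_eq_mul, mul_one]
      exact (diag_const hn2 x hdiag i).symm
    · simp only [Matrix.smul_apply, Matrix.one_apply_ne h, smul_eq_mul, mul_zero]
      exact (hoff i j h).symm
  · rintro ⟨lam, rfl⟩
    have hmap : (lam • (1 : Matrix (Fin n) (Fin n) k)).map (C : k → MvPolynomial (Fin n) k)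
        = (C lam : MvPolynomial (Fin n) k) • (1 : Matrix (Fin n) (Fin n) (MvPolynomial (Fin n) k)) := by
      ext i j
      by_cases h : i = j <;>
        simp [Matrix.map_apply, Matrix.one_apply, h]
    rw [hmap, Matrix.mul_smul, Matrix.mul_one, transpose_smul, hsym]
end

section
/- Let k be an algebraically closed field with char k = 0 or char k > d, and let f be a nondegenerate form of degree d in n variables over k. Then the following are equivalent: (1) f can be reconstructed from its Jacobian ideal, i.e., for every form g of degree d in n variables with span_k{∂g/∂x_1,…,∂g/∂x_n} = span_k{∂f/∂x_1,…,∂f/∂x_n}, there exists λ ∈ k, λ ≠ 0, with g = λ·f; (2) f is central, i.e., Z(f) = k·I_n. -/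
open MvPolynomial Matrix

section PolyAux
variable {k : Type*} [CommRing k] {σ : Type*}

theorem my_pderiv_comm (i j : σ) (f : MvPolynomial σ k) :
    pderiv i (pderiv j f) = pderiv j (pderiv i f) := by
  classical
  induction f using MvPolynomial.induction_on with
  | C a => simp
  | add p q hp hq => simp [hp, hq]
  | mul_X p s hp =>
    simp only [pderiv_mul, map_add, hp, pderiv_X, Pi.single_apply, apply_ite, _root_.map_one, map_zero,
      pderiv_one]
    split_ifs <;> ring

theorem X_mul_pderiv_monomial (i : σ) (s : σ →₀ ℕ) (a : k) :
    X i * pderiv i (monomial s a) = (s i) • monomial s a := by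
  classical
  rw [pderiv_monomial]
  by_cases h : s i = 0
  · simp [h]
  · have hs : Finsupp.single i 1 + (s - Finsupp.single i 1) = s := by
      ext j
      by_cases hj : j = i
      · subst hj; simp [Finsupp.tsub_apply]; omega
      · simp [Finsupp.single_apply, Ne.symm hj, Finsupp.tsub_apply]
    rw [X, monomial_mul, hs, smul_monomial]
    congr 1
    rw [nsmul_eq_mul]
    ring

variable [Fintype σ]

theorem degree_eq_sum_univ (s : σ →₀ ℕ) : s.degree = ∑ i, s i :=
  Finset.sum_subset (Finset.subset_univ _) (fun i _ hi => Finsupp.notMem_support_iff.mp hi)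

theorem my_euler {f : MvPolynomial σ k} {d : ℕ} (hf : f.IsHomogeneous d) :
    ∑ i, X i * pderiv i f = d • f := by
  calc ∑ i, X i * pderiv i f
      = ∑ i, X i * pderiv i (∑ s ∈ f.support, monomial s (coeff s f)) := by
        rw [f.support_sum_monomial_coeff]
    _ = ∑ s ∈ f.support, ∑ i, X i * pderiv i (monomial s (coeff s f)) := by
        simp_rw [map_sum, Finset.mul_sum]; rw [Finset.sum_comm]
    _ = ∑ s ∈ f.support, d • monomial s (coeff s f) := by
        refine Finset.sum_congr rfl fun s hs => ?_
        have hdeg : s.degree = d := by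
          have := hf (mem_support_iff.mp hs)
          rw [Finsupp.degree_eq_weight_one]; exact this
        simp_rw [_root_.X_mul_pderiv_monomial]
        rw [← Finset.sum_smul, ← degree_eq_sum_univ, hdeg]
    _ = d • f := by rw [← Finset.smul_sum, f.support_sum_monomial_coeff]

theorem my_isHomogeneous_pderiv {f : MvPolynomial σ k} {d : ℕ} (hf : f.IsHomogeneous d)
    (i : σ) : (pderiv i f).IsHomogeneous (d - 1) := by
  classical
  rw [← f.support_sum_monomial_coeff, map_sum]
  apply IsHomogeneous.sum
  intro s hs
  rw [pderiv_monomial]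
  by_cases h : s i = 0
  · rw [h]
    simp only [Nat.cast_zero, mul_zero]
    rw [monomial_zero]
    exact (homogeneousSubmodule σ k (d-1)).zero_mem
  · apply isHomogeneous_monomial
    have hdeg : s.degree = d := by
      have := hf (mem_support_iff.mp hs)
      rw [Finsupp.degree_eq_weight_one]; exact this
    rw [degree_eq_sum_univ] at hdeg ⊢
    have h3 : ∀ j ∈ Finset.univ.erase i, ((s - Finsupp.single i 1 : σ →₀ ℕ)) j = s j := by
      intro j hj
      have : j ≠ i := Finset.ne_of_mem_erase hj
      simp [Finsupp.tsub_apply, Finsupp.single_apply, Ne.symm this]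
    have h4 : ((s - Finsupp.single i 1 : σ →₀ ℕ)) i = s i - 1 := by
      simp [Finsupp.tsub_apply]
    rw [← Finset.add_sum_erase _ _ (Finset.mem_univ i), Finset.sum_congr rfl h3, h4]
    rw [← Finset.add_sum_erase _ _ (Finset.mem_univ i)] at hdeg
    show s i - 1 + ∑ x ∈ Finset.univ.erase i, s x = d - 1
    omega
end PolyAux

section LinAux
variable {k : Type*} [Field k] {n : ℕ}

theorem span_eq_of_matrix {M : Type*} [AddCommGroup M] [Module k M] (v w : Fin n → M)
    (B : Matrix (Fin n) (Fin n) k) (hB : IsUnit B.det)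
    (h : ∀ i, w i = ∑ j, B i j • v j) :
    Submodule.span k (Set.range w) = Submodule.span k (Set.range v) := by
  apply le_antisymm
  · rw [Submodule.span_le]
    rintro _ ⟨i, rfl⟩
    rw [h]
    exact Submodule.sum_mem _ fun j _ =>
      Submodule.smul_mem _ _ (Submodule.subset_span ⟨j, rfl⟩)
  · rw [Submodule.span_le]
    rintro _ ⟨i, rfl⟩
    have hv : v i = ∑ m, B⁻¹ i m • w m := by
      simp_rw [h, Finset.smul_sum, smul_smul]
      rw [Finset.sum_comm]
      simp_rw [← Finset.sum_smul, ← Matrix.mul_apply, Matrix.nonsing_inv_mul B hB,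
        Matrix.one_apply]
      simp
    rw [hv]
    exact Submodule.sum_mem _ fun m _ =>
      Submodule.smul_mem _ _ (Submodule.subset_span ⟨m, rfl⟩)

theorem exists_add_smul_one_isUnit [IsAlgClosed k] (Xm : Matrix (Fin n) (Fin n) k) :
    ∃ t : k, IsUnit (Xm + t • 1).det := by
  have hq : (-Xm).charpoly ≠ 0 := (Matrix.charpoly_monic _).ne_zero
  obtain ⟨t, ht⟩ : ∃ t, ¬ (-Xm).charpoly.IsRoot t := by
    obtain ⟨t, ht⟩ := (Polynomial.finite_setOf_isRoot hq).infinite_compl.nonempty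
    exact ⟨t, ht⟩
  refine ⟨t, ?_⟩
  have hmap : (Xm + t • 1) = (charmatrix (-Xm)).map (Polynomial.evalRingHom t) := by
    ext i j
    by_cases h : i = j
    · subst h
      simp [Matrix.one_apply, charmatrix_apply_eq, add_comm]
    · simp [Matrix.one_apply, h, charmatrix_apply_ne _ _ _ h]
  have : ((charmatrix (-Xm)).map (Polynomial.evalRingHom t)).det
      = Polynomial.eval t (-Xm).charpoly := ((Polynomial.evalRingHom t).map_det _).symm
  rw [hmap, this, isUnit_iff_ne_zero]
  exact ht
end LinAux

set_option maxHeartbeats 1000000 in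
theorem dir1 {k : Type*} [Field k] [IsAlgClosed k] {n d : ℕ}
    (hd : 3 ≤ d) (hdk : (d : k) ≠ 0)
    (f : MvPolynomial (Fin n) k) (hf : f.IsHomogeneous d)
    (hnd : LinearIndependent k fun i : Fin n => pderiv i f)
    (hrec : ∀ g : MvPolynomial (Fin n) k, g.IsHomogeneous d →
        Submodule.span k (Set.range fun i : Fin n => pderiv i g)
          = Submodule.span k (Set.range fun i : Fin n => pderiv i f) →
        ∃ lam : k, lam ≠ 0 ∧ g = lam • f) :
    center f = Set.range (fun lam : k => lam • (1 : Matrix (Fin n) (Fin n) k)) := by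
  classical
  apply Set.Subset.antisymm
  · intro Xm hX
    have hX' : (hessian f * Xm.map (C : k → MvPolynomial (Fin n) k))ᵀ
        = hessian f * Xm.map (C : k → MvPolynomial (Fin n) k) := hX
    have hXe : ∀ i m : Fin n, ∑ j, pderiv m (pderiv j f) * C (Xm j i)
        = ∑ j, pderiv i (pderiv j f) * C (Xm j m) := by
      intro i m
      have h1 := congrFun (congrFun hX' i) m
      simpa only [Matrix.transpose_apply, Matrix.mul_apply, Matrix.map_apply, hessian,
        Matrix.of_apply] using h1
    obtain ⟨t, hU⟩ := exists_add_smul_one_isUnit Xm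
    set A : Matrix (Fin n) (Fin n) k :=
      Matrix.of (fun i j => Xm j i + t * (if j = i then 1 else 0)) with hAdef
    have hAapp : ∀ i j, A i j = Xm j i + t * (if j = i then 1 else 0) := fun i j => rfl
    have hAeq : A = (Xm + t • 1)ᵀ := by
      refine Matrix.ext fun i j => ?_
      rw [hAapp]
      simp [Matrix.transpose_apply, Matrix.add_apply, Matrix.smul_apply, Matrix.one_apply]
    have hAdet : IsUnit A.det := by rw [hAeq, Matrix.det_transpose]; exact hU
    have h2 : ∀ i m : Fin n, ∑ j, C (A i j) * pderiv m (pderiv j f)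
        = (∑ j, pderiv m (pderiv j f) * C (Xm j i)) + C t * pderiv m (pderiv i f) := by
      intro i m
      calc ∑ j, C (A i j) * pderiv m (pderiv j f)
          = ∑ j, (pderiv m (pderiv j f) * C (Xm j i)
              + (if j = i then C t * pderiv m (pderiv j f) else 0)) := by
            refine Finset.sum_congr rfl fun j _ => ?_
            rw [hAapp]
            by_cases h : j = i <;> simp [h, map_add, _root_.map_mul] <;> ring
        _ = (∑ j, pderiv m (pderiv j f) * C (Xm j i)) + C t * pderiv m (pderiv i f) := by
            rw [Finset.sum_add_distrib, Finset.sum_ite_eq' Finset.univ i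
              (fun j => C t * pderiv m (pderiv j f))]
            simp
    have hE : ∀ i m : Fin n, ∑ j, C (A i j) * pderiv m (pderiv j f)
        = ∑ j, C (A m j) * pderiv i (pderiv j f) := by
      intro i m
      rw [h2 i m, h2 m i, hXe i m, my_pderiv_comm m i]
    have hdS : ∀ m, pderiv m (∑ i, X i * ∑ j, C (A i j) * pderiv j f)
        = d • ∑ j, C (A m j) * pderiv j f := by
      intro m
      rw [map_sum]
      calc ∑ i, pderiv m (X i * ∑ j, C (A i j) * pderiv j f)
          = ∑ i, (pderiv m (X i) * ∑ j, C (A i j) * pderiv j f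
              + X i * ∑ j, C (A i j) * pderiv m (pderiv j f)) := by
            refine Finset.sum_congr rfl fun i _ => ?_
            rw [pderiv_mul, map_sum]
            simp_rw [pderiv_C_mul]
        _ = (∑ j, C (A m j) * pderiv j f)
            + ∑ i, X i * ∑ j, C (A m j) * pderiv i (pderiv j f) := by
            rw [Finset.sum_add_distrib]
            refine congrArg₂ (· + ·) ?_ ?_
            · rw [Finset.sum_eq_single m]
              · rw [pderiv_X_self, one_mul]
              · intro i _ hi
                rw [pderiv_X_of_ne hi, zero_mul]
              · intro h; exact absurd (Finset.mem_univ m) h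
            · exact Finset.sum_congr rfl fun i _ => by rw [hE i m]
        _ = (∑ j, C (A m j) * pderiv j f)
            + (d - 1) • ∑ j, C (A m j) * pderiv j f := by
            congr 1
            calc ∑ i, X i * ∑ j, C (A m j) * pderiv i (pderiv j f)
                = ∑ j, C (A m j) * ∑ i, X i * pderiv i (pderiv j f) := by
                  simp_rw [Finset.mul_sum]
                  rw [Finset.sum_comm]
                  refine Finset.sum_congr rfl fun j _ => Finset.sum_congr rfl fun i _ => by ring
              _ = ∑ j, C (A m j) * ((d - 1) • pderiv j f) := by
                  refine Finset.sum_congr rfl fun j _ => ?_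
                  rw [my_euler (my_isHomogeneous_pderiv hf j)]
              _ = (d - 1) • ∑ j, C (A m j) * pderiv j f := by
                  rw [Finset.smul_sum]
                  exact Finset.sum_congr rfl fun j _ => (mul_smul_comm _ _ _)
        _ = d • ∑ j, C (A m j) * pderiv j f := by
            have hd1 : d - 1 + 1 = d := by omega
            rw [add_comm, ← succ_nsmul, hd1]
    set g : MvPolynomial (Fin n) k :=
      (d : k)⁻¹ • ∑ i, X i * ∑ j, C (A i j) * pderiv j f with hgdef
    have hgp : ∀ m, pderiv m g = ∑ j, C (A m j) * pderiv j f := by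
      intro m
      rw [hgdef, Derivation.map_smul, hdS m, ← Nat.cast_smul_eq_nsmul k, smul_smul,
        inv_mul_cancel₀ hdk, one_smul]
    have hghom : g.IsHomogeneous d := by
      rw [← mem_homogeneousSubmodule, hgdef]
      refine Submodule.smul_mem _ _ ?_
      rw [mem_homogeneousSubmodule]
      apply IsHomogeneous.sum
      intro i _
      have hinner : (∑ j, C (A i j) * pderiv j f).IsHomogeneous (d - 1) := by
        apply IsHomogeneous.sum
        intro j _
        have := (isHomogeneous_C (Fin n) (A i j)).mul (my_isHomogeneous_pderiv hf j)
        rwa [zero_add] at this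
      have h1d : 1 + (d - 1) = d := by omega
      exact h1d ▸ (isHomogeneous_X k i).mul hinner
    have hspan : Submodule.span k (Set.range fun i : Fin n => pderiv i g)
        = Submodule.span k (Set.range fun i : Fin n => pderiv i f) := by
      apply span_eq_of_matrix _ _ A hAdet
      intro i
      rw [hgp i]
      exact Finset.sum_congr rfl fun j _ => (smul_eq_C_mul _ _).symm
    obtain ⟨lam, hlam0, hgl⟩ := hrec g hghom hspan
    have hAm : ∀ m j, A m j = if m = j then lam else 0 := by
      intro m
      have hsum : ∑ j, (A m j - if m = j then lam else 0) • pderiv j f = 0 := by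
        simp_rw [sub_smul, ite_smul, zero_smul, Finset.sum_sub_distrib]
        rw [Finset.sum_ite_eq Finset.univ m (fun j => lam • pderiv j f)]
        simp only [Finset.mem_univ, if_true]
        have : ∑ j, A m j • pderiv j f = pderiv m g := by
          rw [hgp m]
          exact Finset.sum_congr rfl fun j _ => (smul_eq_C_mul _ _)
        rw [this, hgl, Derivation.map_smul, sub_self]
      have h4 := Fintype.linearIndependent_iff.mp hnd _ hsum
      intro j
      exact sub_eq_zero.mp (h4 j)
    refine ⟨lam - t, ?_⟩
    refine Matrix.ext fun i j => ?_
    have h3 := hAm j i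
    rw [hAapp] at h3
    show ((lam - t) • (1 : Matrix (Fin n) (Fin n) k)) i j = Xm i j
    rw [Matrix.smul_apply, Matrix.one_apply, smul_eq_mul]
    by_cases h : i = j
    · subst h
      rw [if_pos rfl, mul_one] at h3
      rw [if_pos rfl] at h3
      rw [if_pos rfl, mul_one]
      linear_combination -h3
    · rw [if_neg h, mul_zero] at h3
      rw [if_neg (fun hji => h hji.symm), add_zero] at h3
      rw [if_neg h, mul_zero]
      exact h3.symm
  · rintro _ ⟨lam, rfl⟩
    show _ = _
    have h1 : (lam • (1 : Matrix (Fin n) (Fin n) k)).map (C : k → MvPolynomial (Fin n) k)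
        = (C lam : MvPolynomial (Fin n) k) • (1 : Matrix (Fin n) (Fin n) (MvPolynomial (Fin n) k)) := by
      refine Matrix.ext fun i j => ?_
      by_cases h : i = j <;> simp [Matrix.one_apply, h]
    rw [h1, Matrix.mul_smul, Matrix.mul_one, Matrix.transpose_smul]
    congr 1
    refine Matrix.ext fun i j => ?_
    rw [Matrix.transpose_apply]
    exact my_pderiv_comm j i f

set_option maxHeartbeats 1000000 in
theorem dir2 {k : Type*} [Field k] [IsAlgClosed k] {n d : ℕ}
    (hd : 3 ≤ d) (hdk : (d : k) ≠ 0) (hn : 0 < n)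
    (f : MvPolynomial (Fin n) k) (hf : f.IsHomogeneous d)
    (hnd : LinearIndependent k fun i : Fin n => pderiv i f)
    (hcen : center f = Set.range (fun lam : k => lam • (1 : Matrix (Fin n) (Fin n) k)))
    (g : MvPolynomial (Fin n) k) (hg : g.IsHomogeneous d)
    (hspan : Submodule.span k (Set.range fun i : Fin n => pderiv i g)
          = Submodule.span k (Set.range fun i : Fin n => pderiv i f)) :
    ∃ lam : k, lam ≠ 0 ∧ g = lam • f := by
  classical
  have hmem : ∀ i, pderiv i g ∈ Submodule.span k (Set.range fun i : Fin n => pderiv i f) := by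
    intro i; rw [← hspan]; exact Submodule.subset_span ⟨i, rfl⟩
  have hex : ∀ i, ∃ c : Fin n → k, ∑ j, c j • pderiv j f = pderiv i g := by
    intro i
    exact (Submodule.mem_span_range_iff_exists_fun k).mp (hmem i)
  choose A hAr using hex
  have hrepr : ∀ i, pderiv i g = ∑ j, A i j • pderiv j f := fun i => (hAr i).symm
  have hsym : ∀ i m, ∑ j, A i j • pderiv m (pderiv j f)
      = ∑ j, A m j • pderiv i (pderiv j f) := by
    intro i m
    have h1 : ∀ i m, pderiv m (pderiv i g) = ∑ j, A i j • pderiv m (pderiv j f) := by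
      intro i m
      rw [hrepr i, map_sum]
      simp_rw [Derivation.map_smul]
    rw [← h1, ← h1, my_pderiv_comm]
  have hcenA : (Matrix.of (fun i j => A j i)) ∈ center f := by
    show _ = _
    refine Matrix.ext fun i m => ?_
    simp only [Matrix.mul_apply, Matrix.transpose_apply, Matrix.map_apply, hessian,
      Matrix.of_apply]
    calc ∑ j, pderiv m (pderiv j f) * C (A i j)
        = ∑ j, A i j • pderiv m (pderiv j f) := by
          refine Finset.sum_congr rfl fun j _ => ?_
          rw [mul_comm, ← smul_eq_C_mul]
      _ = ∑ j, A m j • pderiv i (pderiv j f) := hsym i m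
      _ = ∑ j, pderiv i (pderiv j f) * C (A m j) := by
          refine Finset.sum_congr rfl fun j _ => ?_
          rw [mul_comm, ← smul_eq_C_mul]
  rw [hcen] at hcenA
  obtain ⟨lam, hlamA⟩ := hcenA
  have hAij : ∀ i j, A i j = if i = j then lam else 0 := by
    intro i j
    have h2 := congrFun (congrFun hlamA j) i
    simp only [Matrix.smul_apply, Matrix.one_apply, Matrix.of_apply, smul_eq_mul] at h2
    rw [mul_ite, mul_one, mul_zero] at h2
    rw [← h2]
    by_cases h : i = j
    · simp [h]
    · simp [h, Ne.symm h]
  have hpg : ∀ i, pderiv i g = lam • pderiv i f := by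
    intro i
    rw [hrepr i]
    simp_rw [hAij, ite_smul, zero_smul]
    simp
  have hlam0 : lam ≠ 0 := by
    intro h0
    have hg0 : ∀ i, pderiv i g = 0 := fun i => by rw [hpg i, h0, zero_smul]
    have hbot : Submodule.span k (Set.range fun i : Fin n => pderiv i f) = ⊥ := by
      rw [← hspan, Submodule.span_eq_bot]
      rintro x ⟨i, rfl⟩
      exact hg0 i
    have hP0 : pderiv (⟨0, hn⟩ : Fin n) f = 0 := by
      rw [← Submodule.mem_bot (R := k), ← hbot]
      exact Submodule.subset_span ⟨⟨0, hn⟩, rfl⟩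
    exact LinearIndependent.ne_zero (R := k) (⟨0, hn⟩ : Fin n) hnd hP0
  refine ⟨lam, hlam0, ?_⟩
  have hh : (g - lam • f).IsHomogeneous d := by
    rw [← mem_homogeneousSubmodule]
    exact sub_mem ((mem_homogeneousSubmodule _ _).mpr hg)
      (Submodule.smul_mem _ _ ((mem_homogeneousSubmodule _ _).mpr hf))
  have heu := my_euler hh
  have hz : ∀ i : Fin n, X (R := k) i * pderiv i (g - lam • f) = 0 := by
    intro i
    rw [map_sub, Derivation.map_smul, hpg i]
    simp
  rw [Finset.sum_congr rfl (fun i _ => hz i), Finset.sum_const_zero] at heu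
  have hd0 : (d : k) • (g - lam • f) = 0 := by
    rw [Nat.cast_smul_eq_nsmul, ← heu]
  have h5 := (smul_eq_zero.mp hd0).resolve_left hdk
  rw [sub_eq_zero] at h5
  exact h5


set_option maxHeartbeats 1000000 in
/-- over an algebraically closed field, a nondegenerate form `f` can be
reconstructed from its Jacobian ideal (any form of the same degree with the same span of
first partials is a nonzero scalar multiple of `f`) iff `f` is central. -/
theorem reconstructible_iff_central {k : Type*} [Field k] [IsAlgClosed k] {n d : ℕ}
    (hd : 3 ≤ d) (hchar : ringChar k = 0 ∨ d < ringChar k)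
    (f : MvPolynomial (Fin n) k) (hf : f.IsHomogeneous d)
    (hnd : LinearIndependent k fun i : Fin n => pderiv i f) :
    (∀ g : MvPolynomial (Fin n) k, g.IsHomogeneous d →
        Submodule.span k (Set.range fun i : Fin n => pderiv i g)
          = Submodule.span k (Set.range fun i : Fin n => pderiv i f) →
        ∃ lam : k, lam ≠ 0 ∧ g = lam • f) ↔
      center f = Set.range (fun lam : k => lam • (1 : Matrix (Fin n) (Fin n) k)) := by
  classical
  have hdk : (d : k) ≠ 0 := by
    rcases hchar with h0 | hlt
    · haveI hcp : CharP k 0 := h0 ▸ ringChar.charP k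
      haveI : CharZero k := CharP.charP_to_charZero k
      exact Nat.cast_ne_zero.mpr (by omega)
    · intro hcast
      haveI hcp : CharP k (ringChar k) := ringChar.charP k
      rw [CharP.cast_eq_zero_iff k (ringChar k) d] at hcast
      have := Nat.le_of_dvd (by omega) hcast
      omega
  rcases Nat.eq_zero_or_pos n with hn | hn
  · subst hn
    have hzero : ∀ h : MvPolynomial (Fin 0) k, h.IsHomogeneous d → h = 0 := by
      intro h hh
      have heu := my_euler hh
      rw [Finset.univ_eq_empty, Finset.sum_empty] at heu
      have hd0 : (d : k) • h = 0 := by rw [Nat.cast_smul_eq_nsmul, ← heu]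
      exact (smul_eq_zero.mp hd0).resolve_left hdk
    constructor
    · intro _
      apply Set.Subset.antisymm
      · intro Xm _
        exact ⟨0, Subsingleton.elim _ _⟩
      · rintro _ ⟨lam, rfl⟩
        show _ = _
        exact Subsingleton.elim _ _
    · intro _ g hg _
      exact ⟨1, one_ne_zero, by rw [hzero g hg, hzero f hf, smul_zero]⟩
  · constructor
    · intro hrec
      exact dir1 hd hdk f hf hnd hrec
    · intro hcen g hg hspan
      exact dir2 hd hdk hn f hf hnd hcen g hg hspan
end

section
/- Let f be a form of degree d in n variables over k with symmetric tensor A, i.e., A : {1,…,n}^d → k is invariant under all permutations of its d arguments and f = Σ_{i_1,…,i_d} A(i_1,…,i_d) x_{i_1}⋯x_{i_d}. For indices i_3,…,i_d let A^{(i_3⋯i_d)} denote the n×n matrix whose (i_1,i_2) entry is A(i_1,i_2,i_3,…,i_d). Then for every X ∈ k^{n×n}, the matrix H·X is symmetric (where H is the Hessian matrix of f and X is viewed as a matrix of constant polynomials) if and only if Xᵀ·A^{(i_3⋯i_d)} = A^{(i_3⋯i_d)}·X for all 1 ≤ i_3,…,i_d ≤ n. -/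
/-!
Write `f = ∑_v A(v) x_{v 1} ⋯ x_{v d}` with `A` symmetric. Peeling off the first variable,
`f = ∑_a x_a · f_a` where `f_a` is the form of the slice `A(a, ·)`, and induction on the degree
gives `∂_j f = d · (form of A(j, ·))`. Hence the Hessian entry `H_ij` is `d(d-1)` times the form
of the slice `A(i, j, ·)`, and `(H X)_ij` is `d(d-1)` times the form of `w ↦ (A^{(w)} X)_ij`.
The same derivative formula shows, by induction, that a symmetric tensor whose form vanishes is
zero once `(d-2)!` is invertible. So `H X` is symmetric iff every `A^{(w)} X` is, i.e.
`Xᵀ A^{(w)} = A^{(w)} X`, since each slice `A^{(w)}` is itself symmetric.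
-/

open MvPolynomial Matrix

/-- Given a symmetric `d`-tensor `A` and fixed last `d - 2` indices `w`, the `n × n`
matrix `A^{(i₃⋯i_d)}` with `(i₁,i₂)` entry `A(i₁,i₂,w)`. -/
def sliceMatrix {k : Type*} [Field k] {n d : ℕ} (hd : 3 ≤ d)
    (A : (Fin d → Fin n) → k) (w : Fin (d - 2) → Fin n) : Matrix (Fin n) (Fin n) k :=
  Matrix.of fun i₁ i₂ => A fun t =>
    if (t : ℕ) = 0 then i₁
    else if (t : ℕ) = 1 then i₂
    else w ⟨(t : ℕ) - 2, by have ht := t.isLt; omega⟩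

open scoped Nat

def IsSymmetricTensor {σ R : Type*} {m : ℕ} (A : (Fin m → σ) → R) : Prop :=
  ∀ (p : Equiv.Perm (Fin m)) (v : Fin m → σ), A (v ∘ p) = A v

namespace IsSymmetricTensor

variable {σ R : Type*} {m : ℕ}

theorem cons {A : (Fin (m + 1) → σ) → R} (hA : IsSymmetricTensor A) (a : σ) :
    IsSymmetricTensor fun u : Fin m → σ => A (Fin.cons a u) := by
  intro p u
  -- `decomposeFin.symm (0, p)` fixes `0` and acts by `p` on the successors
  have hperm : (Fin.cons a (u ∘ p) : Fin (m + 1) → σ) =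
      Fin.cons a u ∘ Equiv.Perm.decomposeFin.symm (0, p) := by
    funext t
    refine Fin.cases ?_ (fun s => ?_) t <;> simp
  exact (congrArg A hperm).trans (hA _ _)

theorem cons_cons_comm {A : (Fin (m + 2) → σ) → R} (hA : IsSymmetricTensor A) (a b : σ)
    (w : Fin m → σ) : A (Fin.cons a (Fin.cons b w)) = A (Fin.cons b (Fin.cons a w)) := by
  have hswap : (Fin.cons b (Fin.cons a w) : Fin (m + 2) → σ) =
      Fin.cons a (Fin.cons b w) ∘ Equiv.swap 0 1 := by
    funext t
    refine Fin.cases ?_ (Fin.cases ?_ fun s => ?_) t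
    · simp
    · simp
    · rw [Function.comp_apply, Equiv.swap_apply_of_ne_of_ne (Fin.succ_ne_zero _)
        (by simp [Fin.ext_iff])]
      simp
  rw [hswap, hA]

theorem sub [Sub R] {A B : (Fin m → σ) → R} (hA : IsSymmetricTensor A)
    (hB : IsSymmetricTensor B) : IsSymmetricTensor (A - B) := fun p v => by
  simp only [Pi.sub_apply, hA p v, hB p v]

end IsSymmetricTensor

noncomputable def tensorForm (R σ : Type*) [CommSemiring R] [Fintype σ] (m : ℕ) :
    ((Fin m → σ) → R) →ₗ[R] MvPolynomial σ R :=
  Fintype.linearCombination R fun v => ∏ t, X (v t)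

section tensorForm

variable {R σ : Type*} [CommSemiring R] [Fintype σ] {m : ℕ}

theorem tensorForm_apply (A : (Fin m → σ) → R) :
    tensorForm R σ m A = ∑ v, C (A v) * ∏ t, X (v t) := by
  simp only [tensorForm, Fintype.linearCombination_apply, smul_eq_C_mul]

theorem tensorForm_zero (A : (Fin 0 → σ) → R) : tensorForm R σ 0 A = C (A Fin.elim0) := by
  simp [tensorForm_apply, Subsingleton.elim _ (Fin.elim0 : Fin 0 → σ)]

theorem tensorForm_succ (A : (Fin (m + 1) → σ) → R) :
    tensorForm R σ (m + 1) A = ∑ a, X a * tensorForm R σ m fun u => A (Fin.cons a u) := by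
  have hcons (x : σ × (Fin m → σ)) : Fin.consEquiv (fun _ => σ) x = Fin.cons x.1 x.2 := rfl
  simp only [tensorForm_apply, ← Equiv.sum_comp (Fin.consEquiv fun _ => σ),
    Fintype.sum_prod_type, hcons, Fin.prod_univ_succ, Fin.cons_zero, Fin.cons_succ,
    Finset.mul_sum, mul_left_comm]

variable [DecidableEq σ]

theorem sum_pderiv_X_mul (j : σ) (g : σ → MvPolynomial σ R) :
    ∑ a, pderiv j (X a : MvPolynomial σ R) * g a = g j := by
  simp [pderiv_X, Pi.single_apply]

theorem IsSymmetricTensor.pderiv_tensorForm {A : (Fin (m + 1) → σ) → R}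
    (hA : IsSymmetricTensor A) (j : σ) :
    pderiv j (tensorForm R σ (m + 1) A) =
      (m + 1) • tensorForm R σ m fun u => A (Fin.cons j u) := by
  induction m with
  | zero => simp [tensorForm_succ, tensorForm_zero, pderiv_X, Pi.single_apply]
  | succ m ih =>
    have hslice (a : σ) : pderiv j (tensorForm R σ (m + 1) fun u => A (Fin.cons a u)) =
        (m + 1) • tensorForm R σ m fun w => A (Fin.cons j (Fin.cons a w)) := by
      simp only [ih (hA.cons a), hA.cons_cons_comm a j]
    rw [tensorForm_succ, map_sum]
    simp only [pderiv_mul, Finset.sum_add_distrib, sum_pderiv_X_mul, hslice, mul_smul_comm,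
      ← Finset.smul_sum]
    rw [tensorForm_succ (fun u => A (Fin.cons j u))]
    ring

end tensorForm

section IsDomain

variable {R σ : Type*} [CommRing R] [IsDomain R] [Fintype σ] [DecidableEq σ] {m : ℕ}

theorem IsSymmetricTensor.eq_zero_of_tensorForm_eq_zero {A : (Fin m → σ) → R}
    (hA : IsSymmetricTensor A) (hm : (m ! : R) ≠ 0) (h : tensorForm R σ m A = 0) : A = 0 := by
  induction m with
  | zero =>
    rw [tensorForm_zero, C_eq_zero] at h
    funext v
    rwa [Subsingleton.elim v Fin.elim0]
  | succ m ih =>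
    rw [Nat.factorial_succ, Nat.cast_mul, mul_ne_zero_iff] at hm
    have hslice (a : σ) : (fun u => A (Fin.cons a u)) = 0 := by
      refine ih (hA.cons a) hm.2 ?_
      have hderiv := hA.pderiv_tensorForm a
      rw [h, map_zero, ← Nat.cast_smul_eq_nsmul R, eq_comm, smul_eq_zero] at hderiv
      exact hderiv.resolve_left (by exact_mod_cast hm.1)
    funext v
    rw [← Fin.cons_self_tail v]
    exact congrFun (hslice (v 0)) _

theorem IsSymmetricTensor.tensorForm_inj {A B : (Fin m → σ) → R} (hA : IsSymmetricTensor A)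
    (hB : IsSymmetricTensor B) (hm : (m ! : R) ≠ 0) :
    tensorForm R σ m A = tensorForm R σ m B ↔ A = B :=
  ⟨fun h => sub_eq_zero.mp <|
    (hA.sub hB).eq_zero_of_tensorForm_eq_zero hm (by rw [map_sub, h, sub_self]),
   congrArg _⟩

end IsDomain

theorem cast_factorial_ne_zero_of_ringChar {R : Type*} [Ring R] [NoZeroDivisors R] [Nontrivial R]
    {d : ℕ} (h : ringChar R = 0 ∨ d < ringChar R) : (d ! : R) ≠ 0 := by
  rw [Ne, ringChar.spec]
  rcases h with h | h
  · rw [h, zero_dvd_iff]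
    exact d.factorial_ne_zero
  · have hp : (ringChar R).Prime :=
      (CharP.char_is_prime_or_zero R _).resolve_right (by omega)
    rw [hp.dvd_factorial]
    omega

def tensorSlice {σ R : Type*} {m : ℕ} (A : (Fin (m + 2) → σ) → R) (w : Fin m → σ) :
    Matrix σ σ R :=
  Matrix.of fun i j => A (Fin.cons i (Fin.cons j w))

namespace IsSymmetricTensor

variable {σ R : Type*} {m : ℕ}

theorem transpose_tensorSlice {A : (Fin (m + 2) → σ) → R} (hA : IsSymmetricTensor A)
    (w : Fin m → σ) : (tensorSlice A w)ᵀ = tensorSlice A w := by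
  ext i j
  exact hA.cons_cons_comm j i w

theorem tensorSlice_comp {A : (Fin (m + 2) → σ) → R} (hA : IsSymmetricTensor A)
    (w : Fin m → σ) (p : Equiv.Perm (Fin m)) : tensorSlice A (w ∘ p) = tensorSlice A w := by
  ext i j
  exact (hA.cons i).cons j p w

variable {k : Type*} [Field k] [Fintype σ] [DecidableEq σ] {A : (Fin (m + 2) → σ) → k}

theorem hessian_tensorForm (hA : IsSymmetricTensor A) (i j : σ) :
    hessian (tensorForm k σ (m + 2) A) i j =
      ((m + 2) * (m + 1)) • tensorForm k σ m fun w => tensorSlice A w i j := by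
  rw [hessian, of_apply, hA.pderiv_tensorForm, map_nsmul, (hA.cons j).pderiv_tensorForm, smul_smul]
  simp only [tensorSlice, of_apply, hA.cons_cons_comm j i]

theorem hessian_mul_map_C (hA : IsSymmetricTensor A) (M : Matrix σ σ k) (i j : σ) :
    (hessian (tensorForm k σ (m + 2) A) * M.map (C : k → MvPolynomial σ k)) i j =
      ((m + 2) * (m + 1)) •
        tensorForm k σ m fun w => (tensorSlice A w * M : Matrix σ σ k) i j := by
  simp only [mul_apply, hA.hessian_tensorForm, map_apply, smul_mul_assoc, ← Finset.smul_sum]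
  congr 1
  simp only [mul_comm _ (C _), ← smul_eq_C_mul, ← map_smul, ← map_sum]
  congr 1
  funext w
  simp only [Finset.sum_apply, Pi.smul_apply, smul_eq_mul, mul_comm]

theorem mem_center_tensorForm_iff (hA : IsSymmetricTensor A) (hm : ((m + 2)! : k) ≠ 0)
    (M : Matrix σ σ k) :
    M ∈ center (tensorForm k σ (m + 2) A) ↔
      ∀ w, Mᵀ * tensorSlice A w = tensorSlice A w * M := by
  rw [Nat.factorial_succ, Nat.factorial_succ, ← mul_assoc, Nat.cast_mul, mul_ne_zero_iff] at hm
  have hrow (i j : σ) : IsSymmetricTensor fun w => (tensorSlice A w * M : Matrix σ σ k) i j :=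
    fun p w => by simp only [hA.tensorSlice_comp]
  calc M ∈ center (tensorForm k σ (m + 2) A)
      ↔ ∀ i j, (hessian (tensorForm k σ (m + 2) A) * M.map (C : k → MvPolynomial σ k)) j i =
          (hessian (tensorForm k σ (m + 2) A) * M.map (C : k → MvPolynomial σ k)) i j := by
        simp only [center, Set.mem_ofPred_eq, ← Matrix.ext_iff, transpose_apply]
    _ ↔ ∀ i j, (fun w => (tensorSlice A w * M) j i) = fun w => (tensorSlice A w * M) i j := by
        simp only [hA.hessian_mul_map_C, ← Nat.cast_smul_eq_nsmul k, smul_right_inj hm.1,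
          (hrow _ _).tensorForm_inj (hrow _ _) hm.2]
    _ ↔ ∀ w, (tensorSlice A w * M)ᵀ = tensorSlice A w * M :=
        ⟨fun h w => Matrix.ext fun i j => congrFun (h i j) w,
         fun h i j => funext fun w => congrFun (congrFun (h w) i) j⟩
    _ ↔ ∀ w, Mᵀ * tensorSlice A w = tensorSlice A w * M := by
        simp only [transpose_mul, hA.transpose_tensorSlice]

end IsSymmetricTensor

theorem sliceMatrix_eq_tensorSlice {k : Type*} [Field k] {n m : ℕ} (hd : 3 ≤ m + 2)
    (A : (Fin (m + 2) → Fin n) → k) (w : Fin (m + 2 - 2) → Fin n) :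
    sliceMatrix hd A w = tensorSlice A w := by
  ext i j
  simp only [sliceMatrix, tensorSlice, of_apply]
  congr 1
  funext t
  refine Fin.cases ?_ (Fin.cases ?_ fun s => ?_) t <;> simp

/-- for a form `f` with symmetric tensor `A`, a scalar matrix `M` makes
`H·M` symmetric (`H` the Hessian of `f`) iff `Mᵀ·A^{(i₃⋯i_d)} = A^{(i₃⋯i_d)}·M` for all
choices of the indices `i₃,…,i_d`. -/
theorem hessian_center_iff_tensor_slices {k : Type*} [Field k] {n d : ℕ} (hd : 3 ≤ d)
    (hchar : ringChar k = 0 ∨ d < ringChar k)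
    (A : (Fin d → Fin n) → k)
    (hsym : ∀ (p : Equiv.Perm (Fin d)) (v : Fin d → Fin n), A (v ∘ p) = A v)
    (f : MvPolynomial (Fin n) k)
    (hf : f = ∑ v : Fin d → Fin n, C (A v) * ∏ t : Fin d, X (v t))
    (M : Matrix (Fin n) (Fin n) k) :
    M ∈ center f ↔
      ∀ w : Fin (d - 2) → Fin n,
        Mᵀ * sliceMatrix hd A w = sliceMatrix hd A w * M := by
  obtain ⟨m, rfl⟩ : ∃ m, d = m + 2 := ⟨d - 2, by omega⟩
  have hA : IsSymmetricTensor A := hsym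
  rw [hf, ← tensorForm_apply,
    hA.mem_center_tensorForm_iff (cast_factorial_ne_zero_of_ringChar hchar)]
  -- `Fin (m + 2 - 2)` and `Fin m` agree definitionally
  simp only [sliceMatrix_eq_tensorSlice]
  rfl
end
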